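/- For mixed radixes m_1,...,m_n with all m_i ≥ 2, for all k' ≤ k (both in [1, m_1⋯m_n]), S(k) − S(k') ≤ 2(k − k') + n − 1. -/
import Mathlib

open Finset in
/-- `P m i = m₁ m₂ ⋯ m_i`, the product of the first `i` radixes
(the empty product for `i = 0` is `1`). -/
def radixProd (m : ℕ → ℕ) (i : ℕ) : ℕ := ∏ t ∈ Finset.range i, m (t + 1)

/-- `mixedRho m n k` is the largest `i` with `0 ≤ i ≤ n` such that
`m₁ m₂ ⋯ m_i` divides `k`. -/
def mixedRho (m : ℕ → ℕ) (n k : ℕ) : ℕ :=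
  Nat.findGreatest (fun i => radixProd m i ∣ k) n

lemma radixProd_dvd (m : ℕ → ℕ) {a b : ℕ} (h : a ≤ b) :
    radixProd m a ∣ radixProd m b :=
  Finset.prod_dvd_prod_of_subset _ _ _ (Finset.range_subset_range.mpr h)

lemma two_pow_le_radixProd (m : ℕ → ℕ) (n : ℕ)
    (hm : ∀ i, 1 ≤ i → i ≤ n → 2 ≤ m i) {j : ℕ} (hj : j ≤ n) :
    2 ^ j ≤ radixProd m j := by
  have : (2:ℕ)^j = ∏ t ∈ Finset.range j, 2 := by simp
  rw [this, radixProd]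
  refine Finset.prod_le_prod' fun t ht => ?_
  exact hm (t+1) (by omega) (by have := Finset.mem_range.mp ht; omega)

lemma rho_filter (m : ℕ → ℕ) (n i : ℕ) :
    (Finset.range (n+1)).filter (fun j => radixProd m j ∣ i)
      = Finset.range (mixedRho m n i + 1) := by
  have h3 : Nat.findGreatest (fun i' => radixProd m i' ∣ i) n = mixedRho m n i := rfl
  have hle : mixedRho m n i ≤ n := by
    rw [← h3]; exact Nat.findGreatest_le n
  have hspec : radixProd m (mixedRho m n i) ∣ i := by
    rw [← h3]
    exact Nat.findGreatest_spec (P := fun i' => radixProd m i' ∣ i) (Nat.zero_le n)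
      (by simp [radixProd])
  ext j
  simp only [Finset.mem_filter, Finset.mem_range]
  constructor
  · rintro ⟨hj, hdvd⟩
    have h2 : j ≤ n := by omega
    have h4 := Nat.le_findGreatest (P := fun i' => radixProd m i' ∣ i) h2 hdvd
    omega
  · intro hj
    exact ⟨by omega, dvd_trans (radixProd_dvd m (by omega : j ≤ mixedRho m n i)) hspec⟩

lemma half_sum_le (N : ℕ) : ∀ x : ℕ, ∑ j ∈ Finset.range N, x / 2^(j+1) ≤ x := by
  induction N with
  | zero => simp
  | succ N ih =>
    intro x
    have hstep : ∀ j : ℕ, x / 2^(j+1+1) = (x/2) / 2^(j+1) := by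
      intro j
      rw [Nat.div_div_eq_div_mul, ← pow_succ']
    have hre : ∑ j ∈ Finset.range (N+1), x / 2^(j+1)
        = ∑ j ∈ Finset.range N, (x/2) / 2^(j+1) + x / 2 := by
      rw [Finset.sum_range_succ']
      simp only [hstep]
      norm_num
    rw [hre]
    have h1 := ih (x/2)
    omega

lemma div_sub_div_le (P a b : ℕ) (hP : 0 < P) (hab : a < b) :
    b / P - a / P ≤ (b - a - 1) / P + 1 := by
  obtain ⟨q, hq⟩ : ∃ q, (b - a - 1) / P = q := ⟨_, rfl⟩
  have h1 := Nat.div_add_mod (b - a - 1) P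
  rw [hq] at h1
  have h2 : (b - a - 1) % P < P := Nat.mod_lt _ hP
  have key : b ≤ a + (q + 1) * P := by
    have h3 : (q + 1) * P = P * q + P := by ring
    omega
  have h4 : b / P ≤ (a + (q + 1) * P) / P := Nat.div_le_div_right key
  rw [Nat.add_mul_div_right _ _ hP] at h4
  rw [hq]
  omega

lemma mult_count (P a b : ℕ) (hab : a ≤ b) :
    ((Finset.Ioc a b).filter (fun i => P ∣ i)).card = b / P - a / P := by
  have hsplit : (Finset.Ioc 0 b).filter (fun i => P ∣ i)
      = (Finset.Ioc 0 a).filter (fun i => P ∣ i) ∪ (Finset.Ioc a b).filter (fun i => P ∣ i) := by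
    rw [← Finset.filter_union, Finset.Ioc_union_Ioc_eq_Ioc (Nat.zero_le a) hab]
  have hdisj : Disjoint ((Finset.Ioc 0 a).filter (fun i => P ∣ i))
      ((Finset.Ioc a b).filter (fun i => P ∣ i)) := by
    simp only [Finset.disjoint_left, Finset.mem_filter, Finset.mem_Ioc]
    rintro x ⟨⟨_, hxa⟩, _⟩ ⟨⟨hax, _⟩, _⟩
    omega
  have hc := congrArg Finset.card hsplit
  rw [Finset.card_union_of_disjoint hdisj, Nat.Ioc_filter_dvd_card_eq_div,
    Nat.Ioc_filter_dvd_card_eq_div] at hc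
  omega

/-- For all `1 ≤ k' ≤ k ≤ m₁ ⋯ m_n`,
`S(k) − S(k') ≤ 2(k − k') + n − 1` where `S(k) = Σ_{i=1}^{k} (ρ(i)+1)`. -/
theorem mixed_S_interval (n : ℕ) (hn : 1 ≤ n) (m : ℕ → ℕ)
    (hm : ∀ i, 1 ≤ i → i ≤ n → 2 ≤ m i)
    (k k' : ℕ) (hk'1 : 1 ≤ k') (hk'k : k' ≤ k) (hk2 : k ≤ radixProd m n) :
    ((∑ i ∈ Finset.Icc 1 k, (mixedRho m n i + 1) : ℕ) : ℤ) -
        (∑ i ∈ Finset.Icc 1 k', (mixedRho m n i + 1) : ℕ) ≤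
      2 * ((k : ℤ) - (k' : ℤ)) + n - 1 := by
  -- reduce to the sum over Ioc k' k
  have hicc : ∀ x : ℕ, Finset.Icc 1 x = Finset.Ioc 0 x := fun x => by
    ext t; simp [Finset.mem_Icc, Finset.mem_Ioc]; omega
  have hsplit : (∑ i ∈ Finset.Icc 1 k, (mixedRho m n i + 1))
      = (∑ i ∈ Finset.Icc 1 k', (mixedRho m n i + 1))
        + ∑ i ∈ Finset.Ioc k' k, (mixedRho m n i + 1) := by
    rw [hicc, hicc, ← Finset.sum_Ioc_consecutive _ (Nat.zero_le k') hk'k]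
  rw [hsplit]
  push_cast
  -- it suffices to bound the Ioc-sum in ℕ
  have main : ∑ i ∈ Finset.Ioc k' k, (mixedRho m n i + 1) ≤ 2 * (k - k') + n - 1 := by
    -- rewrite each summand using the filter identity
    have hsum : ∑ i ∈ Finset.Ioc k' k, (mixedRho m n i + 1)
        = ∑ j ∈ Finset.range (n+1),
            ((Finset.Ioc k' k).filter (fun i => radixProd m j ∣ i)).card := by
      have h1 : ∀ i, mixedRho m n i + 1
          = ∑ j ∈ Finset.range (n+1), (if radixProd m j ∣ i then 1 else 0) := by
        intro i
        rw [← Finset.card_filter, rho_filter, Finset.card_range]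
      calc ∑ i ∈ Finset.Ioc k' k, (mixedRho m n i + 1)
          = ∑ i ∈ Finset.Ioc k' k, ∑ j ∈ Finset.range (n+1),
              (if radixProd m j ∣ i then 1 else 0) := Finset.sum_congr rfl fun i _ => h1 i
        _ = ∑ j ∈ Finset.range (n+1), ∑ i ∈ Finset.Ioc k' k,
              (if radixProd m j ∣ i then 1 else 0) := Finset.sum_comm
        _ = _ := Finset.sum_congr rfl fun j _ => (Finset.card_filter _ _).symm
    rw [hsum]
    rcases Nat.eq_or_lt_of_le hk'k with heq | hlt
    · subst heq
      simp only [Finset.Ioc_self, Finset.filter_empty, Finset.card_empty,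
        Finset.sum_const_zero]
      omega
    -- k' < k
    set d := k - k' with hd
    have hd1 : 1 ≤ d := by omega
    rw [Finset.sum_range_succ']
    have hP0 : ((Finset.Ioc k' k).filter (fun i => radixProd m 0 ∣ i)).card = k - k' := by
      have : radixProd m 0 = 1 := by simp [radixProd]
      rw [this]
      simp [Finset.filter_true_of_mem, Nat.card_Ioc]
    rw [hP0]
    have hterm : ∀ j ∈ Finset.range n,
        ((Finset.Ioc k' k).filter (fun i => radixProd m (j+1) ∣ i)).card
          ≤ (d - 1) / 2^(j+1) + 1 := by
      intro j hj
      have hjn : j + 1 ≤ n := by have := Finset.mem_range.mp hj; omega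
      have hPpos : 0 < radixProd m (j+1) :=
        lt_of_lt_of_le (by positivity) (two_pow_le_radixProd m n hm hjn)
      rw [mult_count _ _ _ hk'k]
      have h2 := div_sub_div_le (radixProd m (j+1)) k' k hPpos hlt
      have h3 : (k - k' - 1) / radixProd m (j+1) ≤ (d - 1) / 2^(j+1) :=
        Nat.div_le_div (by omega) (two_pow_le_radixProd m n hm hjn) (by positivity)
      omega
    have hsum2 : ∑ j ∈ Finset.range n,
        ((Finset.Ioc k' k).filter (fun i => radixProd m (j+1) ∣ i)).card
          ≤ ∑ j ∈ Finset.range n, ((d - 1) / 2^(j+1) + 1) := Finset.sum_le_sum hterm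
    have hsum3 : ∑ j ∈ Finset.range n, ((d - 1) / 2^(j+1) + 1)
        = (∑ j ∈ Finset.range n, (d-1) / 2^(j+1)) + n := by
      rw [Finset.sum_add_distrib]; simp
    have hhalf := half_sum_le n (d - 1)
    omega
  have : ((∑ i ∈ Finset.Ioc k' k, (mixedRho m n i + 1) : ℕ) : ℤ) ≤ 2 * (k - k') + n - 1 := by
    have hcast : ((2 * (k - k') + n - 1 : ℕ) : ℤ) = 2 * ((k:ℤ) - k') + n - 1 := by
      push_cast [Nat.sub_le_iff_le_add]
      omega
    calc ((∑ i ∈ Finset.Ioc k' k, (mixedRho m n i + 1) : ℕ) : ℤ)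
        ≤ ((2 * (k - k') + n - 1 : ℕ) : ℤ) := by exact_mod_cast main
      _ = _ := hcast
  push_cast at this
  linarith
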